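/- Let K = T ∪ A be a DL-Lite_FR KB, let φ be any DL-Lite_FR assertion, and let ψ be an inclusion or functionality assertion. If there exist models J_φ and J_ψ of K with J_φ ⊭ φ and J_ψ ⊭ ψ, then there exists a single model J of K with J ⊭ φ and J ⊭ ψ. (Such a J can be obtained as a disjoint union J_φ^f ⊎ J_ψ^g for injective maps f, g : Δ → Δ with disjoint ranges such that f fixes the constants of K and of φ.) -/

import Mathlib

namespace DLLite

/-- The countably infinite domain of constants. -/
abbrev Δ : Type := ℕ
/-- Countably infinite set of concept names. -/
abbrev ConceptName : Type := ℕ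
/-- Countably infinite set of role names. -/
abbrev RoleName : Type := ℕ

/-- An interpretation assigns a set of domain elements to each concept name
and a binary relation to each role name; constants are interpreted as themselves. -/
structure Interp where
  concept : ConceptName → Set Δ
  role : RoleName → Set (Δ × Δ)

/-- Basic roles: `P` or `P⁻`. -/
inductive BasicRole where
  | pos (P : RoleName)
  | inv (P : RoleName)
deriving DecidableEq

def BasicRole.interp (R : BasicRole) (I : Interp) : Set (Δ × Δ) :=
  match R with
  | .pos P => I.role P
  | .inv P => {p | (p.2, p.1) ∈ I.role P}

/-- Basic concepts: `A` or `∃R`. -/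
inductive BasicConcept where
  | atom (A : ConceptName)
  | ex (R : BasicRole)
deriving DecidableEq

def BasicConcept.interp (B : BasicConcept) (I : Interp) : Set Δ :=
  match B with
  | .atom A => I.concept A
  | .ex R => {o | ∃ o', (o, o') ∈ R.interp I}

/-- DL-Lite_FR assertions: (negative) concept/role inclusions, functionality
assertions, and membership assertions. -/
inductive Assertion where
  | conceptIncl (B1 B2 : BasicConcept)
  | conceptDisj (B1 B2 : BasicConcept)
  | roleIncl (R1 R2 : BasicRole)
  | roleDisj (R1 R2 : BasicRole)
  | funct (R : BasicRole)
  | memberC (A : ConceptName) (a : Δ)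
  | memberR (P : RoleName) (a b : Δ)
deriving DecidableEq

/-- Satisfaction of an assertion by an interpretation. -/
def Interp.sat (I : Interp) : Assertion → Prop
  | .conceptIncl B1 B2 => B1.interp I ⊆ B2.interp I
  | .conceptDisj B1 B2 => B1.interp I ∩ B2.interp I = ∅
  | .roleIncl R1 R2 => R1.interp I ⊆ R2.interp I
  | .roleDisj R1 R2 => R1.interp I ∩ R2.interp I = ∅
  | .funct R => ∀ o o1 o2, (o, o1) ∈ R.interp I → (o, o2) ∈ R.interp I → o1 = o2
  | .memberC A a => a ∈ I.concept A
  | .memberR P a b => (a, b) ∈ I.role P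

/-- TBox assertions: inclusion or functionality assertions. -/
def Assertion.isTBox : Assertion → Prop
  | .memberC _ _ => False
  | .memberR _ _ _ => False
  | _ => True

/-- Membership (ABox) assertions. -/
def Assertion.isMembership : Assertion → Prop
  | .memberC _ _ => True
  | .memberR _ _ _ => True
  | _ => False

/-- The constants occurring in an assertion. -/
def Assertion.constants : Assertion → Set Δ
  | .memberC _ a => {a}
  | .memberR _ a b => {a, b}
  | _ => ∅

/-- A knowledge base: a finite set of assertions (TBox ∪ ABox). -/
abbrev KB := Finset Assertion

/-- The set of models of a KB. -/
def Mod (K : KB) : Set Interp := {I | ∀ a ∈ K, I.sat a}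

/-- Interpretations falsifying at least one assertion of `K`. -/
def NonMod (K : KB) : Set Interp := {I | ∃ a ∈ K, ¬ I.sat a}

/-- The constants occurring in a KB. -/
def KB.constants (K : KB) : Set Δ := ⋃ a ∈ K, Assertion.constants a

/-- Atoms: ground facts `A(o)` or `P(o,o')`. -/
inductive Atom where
  | c (A : ConceptName) (o : Δ)
  | r (P : RoleName) (o o' : Δ)
deriving DecidableEq

/-- The atom set of an interpretation. -/
def Interp.atoms (I : Interp) : Set Atom :=
  fun a => match a with
  | .c A o => o ∈ I.concept A
  | .r P o o' => (o, o') ∈ I.role P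

/-- Concept or role names (symbols). -/
inductive SName where
  | c (A : ConceptName)
  | r (P : RoleName)
deriving DecidableEq

/-- Atom-based set distance: symmetric difference of atom sets. -/
def distASub (I J : Interp) : Set Atom := symmDiff I.atoms J.atoms
/-- Atom-based cardinality distance. -/
noncomputable def distACard (I J : Interp) : ℕ∞ := (symmDiff I.atoms J.atoms).encard
/-- Symbol-based set distance: names interpreted differently. -/
def distSSub (I J : Interp) : Set SName :=
  fun n => match n with
  | .c A => I.concept A ≠ J.concept A
  | .r P => I.role P ≠ J.role P
/-- Symbol-based cardinality distance. -/
noncomputable def distSCard (I J : Interp) : ℕ∞ := (distSSub I J).encard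

/-- Global expansion w.r.t. a distance. -/
def expGlobD {D : Type} [PartialOrder D] (dist : Interp → Interp → D)
    (M N : Set Interp) : Set Interp :=
  {J | J ∈ N ∧ ∃ I ∈ M, ∀ I' ∈ M, ∀ J' ∈ N, ¬ dist I' J' < dist I J}

/-- Local expansion w.r.t. a distance. -/
def expLocD {D : Type} [PartialOrder D] (dist : Interp → Interp → D)
    (M N : Set Interp) : Set Interp :=
  {J | J ∈ N ∧ ∃ I ∈ M, ∀ J' ∈ N, ¬ dist I J' < dist I J}

inductive LocKind | glob | loc
inductive MeasKind | atoms | symbols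
inductive OrdKind | subset | card

/-- The expansion operator on sets of interpretations for each of the
eight model-based semantics `X^y_z`. -/
def expansionSet : LocKind → MeasKind → OrdKind → Set Interp → Set Interp → Set Interp
  | .glob, .atoms, .subset => expGlobD distASub
  | .glob, .atoms, .card => expGlobD distACard
  | .glob, .symbols, .subset => expGlobD distSSub
  | .glob, .symbols, .card => expGlobD distSCard
  | .loc, .atoms, .subset => expLocD distASub
  | .loc, .atoms, .card => expLocD distACard
  | .loc, .symbols, .subset => expLocD distSSub
  | .loc, .symbols, .card => expLocD distSCard

/-- KB expansion `K ⊕ N` under semantics `X^y_z`. -/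
def expandKB (X : LocKind) (y : MeasKind) (z : OrdKind) (K N : KB) : Set Interp :=
  expansionSet X y z (Mod K) (Mod N)

/-- KB contraction `K ⊖ N` under semantics `X^y_z`. -/
def contractKB (X : LocKind) (y : MeasKind) (z : OrdKind) (K N : KB) : Set Interp :=
  Mod K ∪ expansionSet X y z (Mod K) (NonMod N)

/-- Union of two interpretations. -/
def Interp.union (I1 I2 : Interp) : Interp :=
  ⟨fun A => I1.concept A ∪ I2.concept A, fun P => I1.role P ∪ I2.role P⟩

/-- The support set of an interpretation. -/
def Interp.support (I : Interp) : Set Δ :=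
  (⋃ A, I.concept A) ∪ (⋃ P, {o | ∃ o', (o, o') ∈ I.role P ∨ (o', o) ∈ I.role P})

/-- The image `I^f` of an interpretation under an (injective) map `f`. -/
def Interp.image (I : Interp) (f : Δ → Δ) : Interp :=
  ⟨fun A => f '' I.concept A, fun P => (fun p => (f p.1, f p.2)) '' I.role P⟩

/-- `h` is a homomorphism from `I` to `J`. -/
def IsHom (h : Δ → Δ) (I J : Interp) : Prop :=
  (∀ A, h '' I.concept A ⊆ J.concept A) ∧
  (∀ P o o', (o, o') ∈ I.role P → (h o, h o') ∈ J.role P)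

end DLLite

/-!
Rename the two countermodels apart: `Jφ` by an injection `f` fixing the constants of `K` and `φ`,
`Jψ` by an injection `g` whose range misses that of `f`, and take `J = Jφ^f ∪ Jψ^g`. Injective
renamings preserve every assertion whose constants they fix. A union of interpretations with
disjoint supports satisfies every inclusion and functionality assertion satisfied by both parts,
and a membership assertion of `K` already holds in `Jφ^f`; so `J` is a model of `K`. Conversely,
an element of one part's support sees no atom of the other part, so an assertion satisfied by the
union is satisfied by each part that contains all of its constants. This makes `J` falsify `φ`
(whose constants `Jψ^g` avoids) and `ψ` (which has no constants).
-/

namespace DLLite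

lemma Assertion.constants_eq_empty_of_isTBox {a : Assertion} (h : a.isTBox) :
    a.constants = ∅ := by
  cases a <;> first | rfl | exact h.elim

lemma Assertion.constants_finite (a : Assertion) : a.constants.Finite := by
  cases a <;> simp [Assertion.constants]

lemma KB.constants_finite (K : KB) : K.constants.Finite :=
  K.finite_toSet.biUnion fun a _ => a.constants_finite

section Union

variable {I J : Interp} {o o' : Δ}

lemma BasicRole.mem_support_of_mem_interp {R : BasicRole} (h : (o, o') ∈ R.interp I) :
    o ∈ I.support := by
  cases R with
  | pos P => exact Or.inr (Set.mem_iUnion.2 ⟨P, o', Or.inl h⟩)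
  | inv P => exact Or.inr (Set.mem_iUnion.2 ⟨P, o', Or.inr h⟩)

lemma BasicConcept.mem_support_of_mem_interp {B : BasicConcept} (h : o ∈ B.interp I) :
    o ∈ I.support := by
  cases B with
  | atom A => exact Or.inl (Set.mem_iUnion.2 ⟨A, h⟩)
  | ex R => exact BasicRole.mem_support_of_mem_interp h.choose_spec


lemma Interp.union_comm (I J : Interp) : I.union J = J.union I := by
  simp only [Interp.union, Set.union_comm]

lemma BasicRole.interp_union (R : BasicRole) (I J : Interp) :
    R.interp (I.union J) = R.interp I ∪ R.interp J := by
  cases R <;> rfl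

lemma BasicConcept.interp_union (B : BasicConcept) (I J : Interp) :
    B.interp (I.union J) = B.interp I ∪ B.interp J := by
  cases B with
  | atom A => rfl
  | ex R => ext o; simp [BasicConcept.interp, BasicRole.interp_union, exists_or]

lemma BasicRole.interp_subset_interp_union (R : BasicRole) (I J : Interp) :
    R.interp I ⊆ R.interp (I.union J) :=
  R.interp_union I J ▸ Set.subset_union_left

lemma BasicConcept.interp_subset_interp_union (B : BasicConcept) (I J : Interp) :
    B.interp I ⊆ B.interp (I.union J) :=
  B.interp_union I J ▸ Set.subset_union_left

lemma BasicRole.mem_interp_union_iff {R : BasicRole} (ho : o ∉ J.support) :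
    (o, o') ∈ R.interp (I.union J) ↔ (o, o') ∈ R.interp I := by
  rw [R.interp_union, Set.mem_union, or_iff_left (mt mem_support_of_mem_interp ho)]

lemma BasicConcept.mem_interp_union_iff {B : BasicConcept} (ho : o ∉ J.support) :
    o ∈ B.interp (I.union J) ↔ o ∈ B.interp I := by
  rw [B.interp_union, Set.mem_union, or_iff_left (mt mem_support_of_mem_interp ho)]

lemma Interp.sat_union (hd : Disjoint I.support J.support) {a : Assertion} (hI : I.sat a)
    (hJ : a.isTBox → J.sat a) : (I.union J).sat a := by
  have outside : ∀ o, o ∉ J.support ∨ o ∉ I.support := fun o =>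
    (em (o ∈ I.support)).imp (fun h => Set.disjoint_left.1 hd h) id
  cases a with
  | conceptIncl B1 B2 =>
    rw [Interp.sat, B1.interp_union, B2.interp_union]
    exact Set.union_subset_union hI (hJ trivial)
  | roleIncl R1 R2 =>
    rw [Interp.sat, R1.interp_union, R2.interp_union]
    exact Set.union_subset_union hI (hJ trivial)
  | conceptDisj B1 B2 =>
    refine Set.eq_empty_of_forall_notMem fun o ⟨h1, h2⟩ => ?_
    rcases outside o with ho | ho
    · exact hI.subset ⟨(BasicConcept.mem_interp_union_iff ho).1 h1,
        (BasicConcept.mem_interp_union_iff ho).1 h2⟩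
    · rw [I.union_comm] at h1 h2
      exact (hJ trivial).subset ⟨(BasicConcept.mem_interp_union_iff ho).1 h1,
        (BasicConcept.mem_interp_union_iff ho).1 h2⟩
  | roleDisj R1 R2 =>
    refine Set.eq_empty_of_forall_notMem fun ⟨o, o'⟩ ⟨h1, h2⟩ => ?_
    rcases outside o with ho | ho
    · exact hI.subset ⟨(BasicRole.mem_interp_union_iff ho).1 h1,
        (BasicRole.mem_interp_union_iff ho).1 h2⟩
    · rw [I.union_comm] at h1 h2
      exact (hJ trivial).subset ⟨(BasicRole.mem_interp_union_iff ho).1 h1,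
        (BasicRole.mem_interp_union_iff ho).1 h2⟩
  | funct R =>
    intro o o1 o2 h1 h2
    rcases outside o with ho | ho
    · exact hI o o1 o2 ((BasicRole.mem_interp_union_iff ho).1 h1)
        ((BasicRole.mem_interp_union_iff ho).1 h2)
    · rw [I.union_comm] at h1 h2
      exact hJ trivial o o1 o2 ((BasicRole.mem_interp_union_iff ho).1 h1)
        ((BasicRole.mem_interp_union_iff ho).1 h2)
  | memberC A c => exact Or.inl hI
  | memberR P c d => exact Or.inl hI

lemma Interp.sat_of_sat_union (hd : Disjoint I.support J.support) {a : Assertion}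
    (hc : ∀ c ∈ a.constants, c ∉ J.support) (h : (I.union J).sat a) : I.sat a := by
  cases a with
  | conceptIncl B1 B2 =>
    intro o ho
    have ho' := h (B1.interp_subset_interp_union I J ho)
    exact (BasicConcept.mem_interp_union_iff
      (Set.disjoint_left.1 hd (BasicConcept.mem_support_of_mem_interp ho))).1 ho'
  | roleIncl R1 R2 =>
    rintro ⟨o, o'⟩ ho
    have ho' := h (R1.interp_subset_interp_union I J ho)
    exact (BasicRole.mem_interp_union_iff
      (Set.disjoint_left.1 hd (BasicRole.mem_support_of_mem_interp ho))).1 ho'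
  | conceptDisj B1 B2 =>
    exact Set.subset_empty_iff.1 (h ▸ Set.inter_subset_inter
      (B1.interp_subset_interp_union I J) (B2.interp_subset_interp_union I J))
  | roleDisj R1 R2 =>
    exact Set.subset_empty_iff.1 (h ▸ Set.inter_subset_inter
      (R1.interp_subset_interp_union I J) (R2.interp_subset_interp_union I J))
  | funct R =>
    intro o o1 o2 h1 h2
    exact h o o1 o2 (R.interp_subset_interp_union I J h1) (R.interp_subset_interp_union I J h2)
  | memberC A c =>
    exact h.resolve_right fun hJ =>
      hc c rfl (BasicConcept.mem_support_of_mem_interp (B := .atom A) hJ)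
  | memberR P c d =>
    exact h.resolve_right fun hJ =>
      hc c (Or.inl rfl) (BasicRole.mem_support_of_mem_interp (R := .pos P) hJ)

end Union

section Image

variable {f : Δ → Δ}

lemma BasicRole.interp_image (R : BasicRole) (I : Interp) (f : Δ → Δ) :
    R.interp (I.image f) = Prod.map f f '' R.interp I := by
  cases R with
  | pos P => rfl
  | inv P =>
    ext ⟨o, o'⟩
    simp only [BasicRole.interp, Interp.image, Set.mem_ofPred_eq, Set.mem_image, Prod.exists,
      Prod.map, Prod.mk.injEq]
    constructor <;> rintro ⟨a, b, h, rfl, rfl⟩ <;> exact ⟨b, a, h, rfl, rfl⟩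

lemma BasicConcept.interp_image (B : BasicConcept) (I : Interp) (f : Δ → Δ) :
    B.interp (I.image f) = f '' B.interp I := by
  cases B with
  | atom A => rfl
  | ex R =>
    ext o
    simp [BasicConcept.interp, BasicRole.interp_image]

lemma Interp.support_image_subset_range (I : Interp) (f : Δ → Δ) :
    (I.image f).support ⊆ Set.range f := by
  intro o ho
  simp only [Interp.support, Interp.image, Set.mem_union, Set.mem_iUnion, Set.mem_ofPred_eq,
    Set.mem_image, Prod.exists, Prod.mk.injEq] at ho
  rcases ho with ⟨-, x, -, rfl⟩ | ⟨-, -, ⟨x, -, -, rfl, -⟩ | ⟨-, x, -, -, rfl⟩⟩ <;>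
    exact Set.mem_range_self x

lemma Interp.sat_image_iff (hf : Function.Injective f) (I : Interp) {a : Assertion}
    (hc : ∀ c ∈ a.constants, f c = c) : (I.image f).sat a ↔ I.sat a := by
  have hff : Function.Injective (Prod.map f f) := hf.prodMap hf
  cases a with
  | conceptIncl B1 B2 =>
    simp only [Interp.sat, BasicConcept.interp_image, Set.image_subset_image_iff hf]
  | roleIncl R1 R2 =>
    simp only [Interp.sat, BasicRole.interp_image, Set.image_subset_image_iff hff]
  | conceptDisj B1 B2 =>
    simp only [Interp.sat, BasicConcept.interp_image, ← Set.image_inter hf, Set.image_eq_empty]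
  | roleDisj R1 R2 =>
    simp only [Interp.sat, BasicRole.interp_image, ← Set.image_inter hff, Set.image_eq_empty]
  | funct R =>
    simp only [Interp.sat, BasicRole.interp_image, Set.mem_image, Prod.exists, Prod.map,
      Prod.mk.injEq]
    constructor
    · intro h o o1 o2 h1 h2
      exact hf (h (f o) (f o1) (f o2) ⟨o, o1, h1, rfl, rfl⟩ ⟨o, o2, h2, rfl, rfl⟩)
    · rintro h _ _ _ ⟨x, y, hxy, rfl, rfl⟩ ⟨x', y', hxy', hx, rfl⟩
      obtain rfl : x = x' := hf hx.symm
      rw [h x y y' hxy hxy']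
  | memberC A c =>
    show c ∈ f '' I.concept A ↔ c ∈ I.concept A
    conv_lhs => rw [← hc c rfl]
    exact hf.mem_set_image
  | memberR P c d =>
    show (c, d) ∈ Prod.map f f '' I.role P ↔ (c, d) ∈ I.role P
    conv_lhs => rw [← hc c (Or.inl rfl), ← hc d (Or.inr rfl)]
    exact hff.mem_set_image (a := (c, d))

end Image

lemma exists_injective_disjoint_range_eqOn {S : Set ℕ} (hS : S.Finite) :
    ∃ f g : ℕ → ℕ, Function.Injective f ∧ Function.Injective g ∧
      Disjoint (Set.range f) (Set.range g) ∧ ∀ c ∈ S, f c = c := by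
  obtain ⟨b, hb⟩ := hS.bddAbove
  -- `f` is the identity up to `b` and then runs through `b + 2ℕ`; `g` runs through `b + 2ℕ + 1`
  refine ⟨fun n => if n ≤ b then n else b + 2 * (n - b), fun n => b + 2 * n + 1,
    ?_, ?_, ?_, ?_⟩
  · intro n m h
    simp only at h
    split_ifs at h <;> omega
  · intro n m h
    simp only at h
    omega
  · rw [Set.disjoint_left]
    rintro _ ⟨n, rfl⟩ ⟨m, hm⟩
    simp only at hm
    split_ifs at hm <;> omega
  · intro c hc
    simp [hb hc]

/-- If a DL-Lite_FR KB `K` has a model falsifying `φ` and a model falsifying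
the inclusion or functionality assertion `ψ`, then it has a single model
falsifying both. -/
theorem exists_model_falsifying_both (K : KB) (φ ψ : Assertion)
    (hψ : ψ.isTBox)
    (Jφ : Interp) (hJφ : Jφ ∈ Mod K) (hφ' : ¬ Jφ.sat φ)
    (Jψ : Interp) (hJψ : Jψ ∈ Mod K) (hψ' : ¬ Jψ.sat ψ) :
    ∃ J ∈ Mod K, ¬ J.sat φ ∧ ¬ J.sat ψ := by
  obtain ⟨f, g, hf, hg, hfg, hfix⟩ :=
    exists_injective_disjoint_range_eqOn (K.constants_finite.union φ.constants_finite)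
  have hd : Disjoint (Jφ.image f).support (Jψ.image g).support :=
    hfg.mono (Jφ.support_image_subset_range f) (Jψ.support_image_subset_range g)
  have hfixK : ∀ a ∈ K, ∀ c ∈ a.constants, f c = c := fun a ha c hc =>
    hfix c (Or.inl (Set.mem_iUnion₂.2 ⟨a, ha, hc⟩))
  have hfixφ : ∀ c ∈ φ.constants, f c = c := fun c hc => hfix c (Or.inr hc)
  have hfixTBox : ∀ {a : Assertion}, a.isTBox → ∀ c ∈ a.constants, g c = c := fun ha => by
    simp [Assertion.constants_eq_empty_of_isTBox ha]
  refine ⟨(Jφ.image f).union (Jψ.image g), fun a ha => ?_, fun h => hφ' ?_, fun h => hψ' ?_⟩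
  · exact Interp.sat_union hd ((Jφ.sat_image_iff hf (hfixK a ha)).2 (hJφ a ha))
      fun hT => (Jψ.sat_image_iff hg (hfixTBox hT)).2 (hJψ a ha)
  · refine (Jφ.sat_image_iff hf hfixφ).1 (Interp.sat_of_sat_union hd (fun c hc hcψ => ?_) h)
    exact Set.disjoint_left.1 hfg ⟨c, hfixφ c hc⟩ (Jψ.support_image_subset_range g hcψ)
  · rw [Interp.union_comm] at h
    refine (Jψ.sat_image_iff hg (hfixTBox hψ)).1 (Interp.sat_of_sat_union hd.symm ?_ h)
    simp [Assertion.constants_eq_empty_of_isTBox hψ]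

end DLLite
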